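/- arXiv:1905.03862 — 4 statements merged into one kernel-verified Lean document; each statement's English description precedes it below -/
import Mathlib

section
/- Let R>0, c2>0, γ>0, k≥1, β∈(-1,0], and define u(r) = (c2(1+γ)/k · (R/(β+1)·(R-r)^{β+1} - 1/(β+2)·(R-r)^{β+2}))^{1/(1+γ)} for r∈[0,R). Then u satisfies the ODE k·u'(r)/r + c2·(R-r)^β·u(r)^{-γ} = 0 for all r∈(0,R), with u'(0)=0 and u(r)→0 as r→R⁻. -/
/-!
Write `u = v ^ (1 / (1 + γ))` with `v = c2 (1 + γ) / k · φ`, where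
`φ(r) = R/(β+1) (R-r)^(β+1) - 1/(β+2) (R-r)^(β+2)`. Differentiating, the two terms combine to
`φ'(r) = -(R - (R - r)) (R-r)^β = -r (R-r)^β`, so `v' = -(c2 (1 + γ) / k) r (R-r)^β`, which vanishes
at `r = 0`; and `(1 + γ) u' = v' u^(-γ)` is exactly the equation. The chain rule applies because
`φ = (R-r)^(β+1) (R/(β+1) - (R-r)/(β+2)) > 0` on `[0, R)`, and `φ(r) → 0` as `r → R` since both
exponents are positive.
-/

open Set Filter Topology

noncomputable def radialProfile (R β r : ℝ) : ℝ :=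
  R / (β + 1) * (R - r) ^ (β + 1) - 1 / (β + 2) * (R - r) ^ (β + 2)

lemma radialProfile_pos {R β r : ℝ} (hβ : -1 < β) (hr₀ : 0 ≤ r) (hr : r < R) :
    0 < radialProfile R β r := by
  have hR : 0 < R := hr₀.trans_lt hr
  have hlt : (R - r) / (β + 2) < R / (β + 1) :=
    calc (R - r) / (β + 2) ≤ R / (β + 2) := by gcongr <;> linarith
      _ < R / (β + 1) := by gcongr <;> linarith
  have hRr : 0 < R - r := by linarith
  have hfactor : radialProfile R β r = (R - r) ^ (β + 1) * (R / (β + 1) - (R - r) / (β + 2)) := by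
    rw [radialProfile, show β + 2 = β + 1 + 1 by ring, Real.rpow_add_one hRr.ne' (β + 1)]
    ring
  rw [hfactor]
  exact mul_pos (Real.rpow_pos_of_pos (by linarith) _) (by linarith)

lemma hasDerivAt_radialProfile {R β r : ℝ} (hβ₁ : β + 1 ≠ 0) (hβ₂ : β + 2 ≠ 0) (hr : r < R) :
    HasDerivAt (radialProfile R β) (-(r * (R - r) ^ β)) r := by
  have hRr : R - r ≠ 0 := by linarith
  have hsub : HasDerivAt (fun x : ℝ => R - x) (-1) r := by
    simpa using (hasDerivAt_id r).const_sub R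
  have h₁ := hsub.rpow_const (p := β + 1) (Or.inl hRr)
  have h₂ := hsub.rpow_const (p := β + 2) (Or.inl hRr)
  refine ((h₁.const_mul (R / (β + 1))).sub (h₂.const_mul (1 / (β + 2)))).congr_deriv ?_
  rw [show β + 2 - 1 = β + 1 by ring, show β + 1 - 1 = β by ring, Real.rpow_add_one hRr]
  field_simp
  ring

lemma continuousAt_radialProfile {R β : ℝ} (hβ : -1 < β) : ContinuousAt (radialProfile R β) R := by
  unfold radialProfile
  have hsub : ContinuousAt (fun x : ℝ => R - x) R := by fun_prop
  have h₁ := hsub.rpow_const (p := β + 1) (Or.inr (by linarith))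
  have h₂ := hsub.rpow_const (p := β + 2) (Or.inr (by linarith))
  exact (h₁.const_mul _).sub (h₂.const_mul _)

lemma tendsto_radialProfile {R β : ℝ} (hβ : -1 < β) :
    Tendsto (radialProfile R β) (𝓝[<] R) (𝓝 0) := by
  have h := (continuousAt_radialProfile (R := R) hβ).tendsto.mono_left
    (nhdsWithin_le_nhds (s := Iio R))
  rwa [radialProfile, sub_self, Real.zero_rpow (by linarith), Real.zero_rpow (by linarith),
    mul_zero, mul_zero, sub_zero] at h

-- Since `1 / (1 + γ) - 1 = 1 / (1 + γ) * (-γ)`, the chain-rule factor `v ^ (1 / (1 + γ) - 1)`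
-- is `(v ^ (1 / (1 + γ))) ^ (-γ)`, which is how `u ^ (-γ)` enters the equation.
lemma HasDerivAt.rpow_one_div_one_add {v : ℝ → ℝ} {v' r γ : ℝ} (hv : HasDerivAt v v' r)
    (hpos : 0 < v r) (hγ : 1 + γ ≠ 0) :
    HasDerivAt (fun x => v x ^ (1 / (1 + γ))) (v' / (1 + γ) * (v r ^ (1 / (1 + γ))) ^ (-γ)) r := by
  convert hv.rpow_const (p := 1 / (1 + γ)) (Or.inl hpos.ne') using 1
  rw [← Real.rpow_mul hpos.le, show 1 / (1 + γ) * -γ = 1 / (1 + γ) - 1 by field_simp; ring]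
  ring

theorem stmt0_general (R c2 γ β : ℝ) (k : ℕ)
    (hR : 0 < R) (hc2 : 0 < c2) (hγ : 0 < γ) (hk : 1 ≤ k)
    (hβ1 : -1 < β)
    (u : ℝ → ℝ)
    (hu : ∀ r, u r =
      (c2 * (1 + γ) / k *
        (R / (β + 1) * (R - r) ^ (β + 1) - 1 / (β + 2) * (R - r) ^ (β + 2))) ^ (1 / (1 + γ))) :
    (∀ r ∈ Set.Ioo (0 : ℝ) R,
        (k : ℝ) * deriv u r / r + c2 * (R - r) ^ β * (u r) ^ (-γ) = 0) ∧
      deriv u 0 = 0 ∧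
      Tendsto u (𝓝[<] R) (𝓝 0) := by
  have hk₀ : (0 : ℝ) < k := by exact_mod_cast hk
  set C := c2 * (1 + γ) / k with hC
  have hu' : u = fun r => (C * radialProfile R β r) ^ (1 / (1 + γ)) := funext hu
  have hderiv : ∀ r, 0 ≤ r → r < R →
      deriv u r = C * -(r * (R - r) ^ β) / (1 + γ) * u r ^ (-γ) := fun r hr₀ hr => by
    rw [hu']
    refine (((hasDerivAt_radialProfile (by linarith) (by linarith) hr).const_mul C)
      |>.rpow_one_div_one_add ?_ (by linarith)).deriv
    exact mul_pos (by positivity) (radialProfile_pos hβ1 hr₀ hr)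
  refine ⟨fun r ⟨hr₀, hr⟩ => ?_, by simp [hderiv 0 le_rfl hR], ?_⟩
  · rw [hderiv r hr₀.le hr, hC]
    field_simp
    ring
  · have h := ((tendsto_radialProfile (R := R) hβ1).const_mul C).rpow_const
      (p := 1 / (1 + γ)) (Or.inr (by positivity))
    rwa [mul_zero, Real.zero_rpow (by positivity), ← hu'] at h

theorem stmt0 (R c2 γ β : ℝ) (k : ℕ)
    (hR : 0 < R) (hc2 : 0 < c2) (hγ : 0 < γ) (hk : 1 ≤ k)
    (hβ1 : -1 < β) (hβ2 : β ≤ 0)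
    (u : ℝ → ℝ)
    (hu : ∀ r, u r =
      (c2 * (1 + γ) / k *
        (R / (β + 1) * (R - r) ^ (β + 1) - 1 / (β + 2) * (R - r) ^ (β + 2))) ^ (1 / (1 + γ))) :
    (∀ r ∈ Set.Ioo (0 : ℝ) R,
        (k : ℝ) * deriv u r / r + c2 * (R - r) ^ β * (u r) ^ (-γ) = 0) ∧
      deriv u 0 = 0 ∧
      Tendsto u (𝓝[<] R) (𝓝 0) :=
  stmt0_general R c2 γ β k hR hc2 hγ hk hβ1 u hu
end

section
/- Let γ>0, k≥1, ρ∈(0,1), and w(r) = ((1+γ)/k · (r - ρ + log((1-r)/(1-ρ))))^{1/(1+γ)}. Then w''(r) ≤ w'(r)/r for all r∈(0,ρ). -/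
/-!
Integrating the radial equation `k w' / r + w^{-γ} / (1 - r) = 0` with `w(ρ) = 0` gives
`w^{1+γ} = c · G` with `c = (1 + γ) / k` and `G(r) = r - ρ + log ((1 - r) / (1 - ρ))`, the
primitive of `-r / (1 - r)` vanishing at `ρ`. Hence `w' = r · q` with
`q(r) = -c α (1 - r)⁻¹ (c G(r))^{α - 1}`, `α = 1 / (1 + γ)`, and `w'' - w' / r = r q'`.
On `(0, ρ)` both `(1 - r)⁻¹` and `(c G)^{α - 1}` are positive and increasing (`G` decreases
to `0` and `α ≤ 1`), so `q' ≤ 0`.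
-/

open Real Set Filter Topology

lemma deriv_deriv_le_deriv_div_of_deriv_eq_mul {w q : ℝ → ℝ} {r q' : ℝ} (hr : 0 < r)
    (hw : deriv w =ᶠ[𝓝 r] fun s => s * q s) (hq : HasDerivAt q q' r) (hq' : q' ≤ 0) :
    deriv (deriv w) r ≤ deriv w r / r := by
  have hd : HasDerivAt (deriv w) (1 * q r + r * q') r :=
    ((hasDerivAt_id r).mul hq).congr_of_eventuallyEq hw
  rw [hd.deriv, hw.eq_of_nhds, mul_div_cancel_left₀ _ hr.ne']
  nlinarith

namespace RadialSolution

noncomputable def primitive (ρ r : ℝ) : ℝ := r - ρ + log ((1 - r) / (1 - ρ))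

lemma hasDerivAt_primitive {ρ r : ℝ} (hρ : ρ < 1) (hr : r < 1) :
    HasDerivAt (primitive ρ) (-r / (1 - r)) r := by
  have hquot : HasDerivAt (fun t : ℝ => (1 - t) / (1 - ρ)) (-1 / (1 - ρ)) r := by
    simpa using ((hasDerivAt_id r).const_sub 1).div_const (1 - ρ)
  have hlog := hquot.log (div_ne_zero (sub_ne_zero.2 hr.ne') (sub_ne_zero.2 hρ.ne'))
  refine (((hasDerivAt_id r).sub_const ρ).add hlog).congr_deriv ?_
  field_simp [sub_ne_zero.2 hr.ne', sub_ne_zero.2 hρ.ne']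
  ring

lemma primitive_pos {ρ r : ℝ} (hρ : ρ < 1) (hr₀ : 0 < r) (hrρ : r < ρ) : 0 < primitive ρ r := by
  have h1r : 0 < 1 - r := by linarith
  have h1ρ : 0 < 1 - ρ := by linarith
  -- `log x ≥ 1 - 1/x`, and `(ρ - r) / (1 - r) > ρ - r` because `0 < r`
  have hlog := one_sub_inv_le_log_of_pos (div_pos h1r h1ρ)
  have hquot : ρ - r < 1 - ((1 - r) / (1 - ρ))⁻¹ := by
    rw [inv_div, one_sub_div h1r.ne', lt_div_iff₀ h1r]
    nlinarith
  unfold primitive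
  linarith

variable {c α ρ : ℝ}

noncomputable def profile (c α ρ r : ℝ) : ℝ := (c * primitive ρ r) ^ α

noncomputable def reducedDeriv (c α ρ r : ℝ) : ℝ :=
  -(c * α) * ((1 - r)⁻¹ * (c * primitive ρ r) ^ (α - 1))

lemma hasDerivAt_profile (hc : 0 < c) (hρ : ρ < 1) {r : ℝ} (hr : r ∈ Ioo 0 ρ) :
    HasDerivAt (profile c α ρ) (r * reducedDeriv c α ρ r) r := by
  have hpos := mul_pos hc (primitive_pos hρ hr.1 hr.2)
  have h1r : (1 : ℝ) - r ≠ 0 := by linarith [hr.2]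
  refine (((hasDerivAt_primitive hρ (by linarith [hr.2])).const_mul c).rpow_const
    (Or.inl hpos.ne')).congr_deriv ?_
  unfold reducedDeriv
  field_simp

lemma deriv_profile_eventuallyEq (hc : 0 < c) (hρ : ρ < 1) {r : ℝ} (hr : r ∈ Ioo 0 ρ) :
    deriv (profile c α ρ) =ᶠ[𝓝 r] fun s => s * reducedDeriv c α ρ s := by
  filter_upwards [isOpen_Ioo.mem_nhds hr] with s hs
  exact (hasDerivAt_profile hc hρ hs).deriv

lemma exists_hasDerivAt_reducedDeriv_nonpos (hc : 0 < c) (hα₀ : 0 ≤ α) (hα₁ : α ≤ 1)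
    (hρ : ρ < 1) {r : ℝ} (hr : r ∈ Ioo 0 ρ) :
    ∃ q', HasDerivAt (reducedDeriv c α ρ) q' r ∧ q' ≤ 0 := by
  have h1r : 0 < 1 - r := by linarith [hr.2]
  have hpos := mul_pos hc (primitive_pos hρ hr.1 hr.2)
  have hinv : HasDerivAt (fun s => (1 - s)⁻¹) (-(-1) / (1 - r) ^ 2) r :=
    ((hasDerivAt_id r).const_sub 1).inv h1r.ne'
  have hpow := ((hasDerivAt_primitive hρ (by linarith)).const_mul c).rpow_const
    (p := α - 1) (Or.inl hpos.ne')
  refine ⟨_, (hinv.mul hpow).const_mul (-(c * α)), ?_⟩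
  have hinv' : 0 ≤ -(-1) / (1 - r) ^ 2 * (c * primitive ρ r) ^ (α - 1) := by positivity
  have hpow' : 0 ≤ c * (-r / (1 - r)) * (α - 1) * (c * primitive ρ r) ^ (α - 1 - 1) := by
    rw [show c * (-r / (1 - r)) * (α - 1) = c * (r / (1 - r)) * (1 - α) by ring]
    have := hr.1
    have : 0 ≤ 1 - α := by linarith
    positivity
  exact mul_nonpos_of_nonpos_of_nonneg (neg_nonpos.2 (by positivity))
    (add_nonneg hinv' (mul_nonneg (inv_nonneg.2 h1r.le) hpow'))

theorem deriv_deriv_profile_le (hc : 0 < c) (hα₀ : 0 ≤ α) (hα₁ : α ≤ 1) (hρ : ρ < 1)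
    {r : ℝ} (hr : r ∈ Ioo 0 ρ) :
    deriv (deriv (profile c α ρ)) r ≤ deriv (profile c α ρ) r / r := by
  obtain ⟨q', hq, hq'⟩ := exists_hasDerivAt_reducedDeriv_nonpos hc hα₀ hα₁ hρ hr
  exact deriv_deriv_le_deriv_div_of_deriv_eq_mul hr.1 (deriv_profile_eventuallyEq hc hρ hr) hq hq'

end RadialSolution

theorem stmt7 (γ ρ : ℝ) (k : ℕ) (hγ : 0 < γ) (hk : 1 ≤ k) (hρ : ρ ∈ Set.Ioo (0 : ℝ) 1)
    (w : ℝ → ℝ)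
    (hw : ∀ r, w r =
      ((1 + γ) / k * (r - ρ + Real.log ((1 - r) / (1 - ρ)))) ^ (1 / (1 + γ))) :
    ∀ r ∈ Set.Ioo (0 : ℝ) ρ, deriv (deriv w) r ≤ deriv w r / r := by
  have hw' : w = RadialSolution.profile ((1 + γ) / k) (1 / (1 + γ)) ρ := funext hw
  have hk₀ : (0 : ℝ) < k := by exact_mod_cast hk
  have hα₁ : 1 / (1 + γ) ≤ 1 := by rw [div_le_one (by linarith)]; linarith
  intro r hr
  subst hw'
  exact RadialSolution.deriv_deriv_profile_le (by positivity) (by positivity) hα₁ hρ.2 hr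
end

section
/- Let k≥1, b>0, R>0, γ>0, β≤-1 with bR≤k, and for ρ∈(0,R) define w(r) = ((1+γ)·∫_r^ρ s(R-s)^β/(k+bs) ds)^{1/(1+γ)}. Then w solves k·w'(r)/r + b·w'(r) + (R-r)^β·w(r)^{-γ} = 0 on (0,ρ) with w(ρ)=0. -/
/-!
Writing `F(r) = ∫_r^ρ g` with `g(s) = s (R - s)^β / (k + b s)`, we have `w^(1+γ) = (1+γ) F`,
so differentiating gives `w' = -g · w^(-γ)`; multiplying by `(k + b r) / r` turns this into the
equation.
-/

open Set MeasureTheory intervalIntegral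

lemma hasDerivAt_rpow_integral_left {g : ℝ → ℝ} {s : Set ℝ} {r ρ γ : ℝ}
    (hγ : 0 < 1 + γ) (hs : IsOpen s) (hg : ContinuousOn g s) (hrρ : uIcc r ρ ⊆ s)
    (hpos : 0 < ∫ t in r..ρ, g t) :
    HasDerivAt (fun u => ((1 + γ) * ∫ t in u..ρ, g t) ^ (1 / (1 + γ)))
      (-g r * (((1 + γ) * ∫ t in r..ρ, g t) ^ (1 / (1 + γ))) ^ (-γ)) r := by
  have hr : r ∈ s := hrρ left_mem_uIcc
  have hX : 0 < (1 + γ) * ∫ t in r..ρ, g t := mul_pos hγ hpos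
  have hintegral : HasDerivAt (fun u => ∫ t in u..ρ, g t) (-g r) r :=
    integral_hasDerivAt_left ((hg.mono hrρ).intervalIntegrable)
      (hg.stronglyMeasurableAtFilter hs r hr) (hg.continuousAt (hs.mem_nhds hr))
  refine ((Real.hasDerivAt_rpow_const (p := 1 / (1 + γ)) (Or.inl hX.ne')).comp r
    (hintegral.const_mul (1 + γ))).congr_deriv ?_
  have hexp : 1 / (1 + γ) * -γ = 1 / (1 + γ) - 1 := by field_simp; ring
  rw [← Real.rpow_mul hX.le, hexp]
  field_simp

section Integrand

variable {R β c b : ℝ}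

lemma continuousOn_integrand (hc : 0 ≤ c) (hb : 0 < b) :
    ContinuousOn (fun s => s * (R - s) ^ β / (c + b * s)) (Ioo 0 R) := by
  refine (continuousOn_id.mul ((continuousOn_const.sub continuousOn_id).rpow_const
    fun s hs => Or.inl ?_)).div (by fun_prop) fun s hs => ?_
  · exact (sub_pos.mpr hs.2).ne'
  · have := hs.1; positivity

lemma integrand_pos (hc : 0 ≤ c) (hb : 0 < b) {s : ℝ} (hs : s ∈ Ioo 0 R) :
    0 < s * (R - s) ^ β / (c + b * s) := by
  have := hs.1
  have := Real.rpow_pos_of_pos (sub_pos.mpr hs.2) β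
  positivity

end Integrand

theorem stmt12_general (b R γ β ρ : ℝ) (k : ℕ) (hb : 0 < b)
    (hγ : 0 < γ) (hρ : ρ ∈ Set.Ioo (0 : ℝ) R)
    (w : ℝ → ℝ)
    (hw : ∀ r, w r =
      ((1 + γ) * ∫ s in r..ρ, s * (R - s) ^ β / (k + b * s)) ^ (1 / (1 + γ))) :
    (∀ r ∈ Set.Ioo (0 : ℝ) ρ,
        (k : ℝ) * deriv w r / r + b * deriv w r + (R - r) ^ β * (w r) ^ (-γ) = 0) ∧
      w ρ = 0 := by
  refine ⟨fun r ⟨hr0, hrρ⟩ => ?_,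
    by rw [hw, integral_same, mul_zero, Real.zero_rpow (by positivity)]⟩
  have hk : (0 : ℝ) ≤ k := k.cast_nonneg
  have hsub : uIcc r ρ ⊆ Ioo 0 R := by
    rw [uIcc_of_le hrρ.le]
    exact fun s hs => ⟨hr0.trans_le hs.1, hs.2.trans_lt hρ.2⟩
  have hcont := continuousOn_integrand (R := R) (β := β) hk hb
  have hpos : 0 < ∫ s in r..ρ, s * (R - s) ^ β / (k + b * s) :=
    intervalIntegral_pos_of_pos_on ((hcont.mono hsub).intervalIntegrable)
      (fun s hs => integrand_pos hk hb ⟨hr0.trans hs.1, hs.2.trans hρ.2⟩) hrρ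
  have hderiv := hasDerivAt_rpow_integral_left (γ := γ) (by linarith) isOpen_Ioo hcont hsub hpos
  rw [← funext hw, ← hw] at hderiv
  rw [hderiv.deriv]
  have : (0 : ℝ) < k + b * r := by positivity
  field_simp
  ring

theorem stmt12 (b R γ β ρ : ℝ) (k : ℕ) (hk : 1 ≤ k) (hb : 0 < b) (hR : 0 < R)
    (hγ : 0 < γ) (hβ : β ≤ -1) (hbR : b * R ≤ k) (hρ : ρ ∈ Set.Ioo (0 : ℝ) R)
    (w : ℝ → ℝ)
    (hw : ∀ r, w r =
      ((1 + γ) * ∫ s in r..ρ, s * (R - s) ^ β / (k + b * s)) ^ (1 / (1 + γ))) :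
    (∀ r ∈ Set.Ioo (0 : ℝ) ρ,
        (k : ℝ) * deriv w r / r + b * deriv w r + (R - r) ^ β * (w r) ^ (-γ) = 0) ∧
      w ρ = 0 :=
  stmt12_general b R γ β ρ k hb hγ hρ w hw
end

section
/- With w as in the previous statement (β≤-1, bR≤k), w''(r) ≤ w'(r)/r for all r∈(0,ρ). Moreover, for each fixed r∈[0,R), w(r)→∞ as ρ→R⁻ (since β≤-1 makes ∫^R s(R-s)^β/(k+bs) ds divergent). -/
/-
Write `f s = s (R - s)^β / (k + b s)`, `g = (1 + γ) ∫_r^ρ f` and `p = 1 / (1 + γ)`, so that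
`w = g^p` and, since `(1 + γ) p = 1`, `w' = -f g^(p-1)` and
`w'' = -f' g^(p-1) - γ f² g^(p-2) ≤ -f' g^(p-1)`. Hence `w'' ≤ w' / r` as soon as `f' ≥ f / r`,
i.e. `1/r - β/(R-r) - b/(k+br) ≥ 1/r`, which is `b (R - r) ≤ -β (k + b r)`.
For the blow-up, `f s ≥ c / (R - s)` near `R` because `(R - s)^β ≥ (R - s)⁻¹` once `R - s ≤ 1`,
so `∫_r^ρ f ≥ C + c log (1 / (R - ρ)) → ∞`.
-/

open Filter Topology Set

lemma hasDerivAt_intervalIntegral_left_of_continuousOn {f : ℝ → ℝ} {a b x ρ : ℝ}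
    (hf : ContinuousOn f (Ioo a b)) (hx : x ∈ Ioo a b) (hρ : ρ ∈ Ioo a b) :
    HasDerivAt (fun u => ∫ s in u..ρ, f s) (-f x) x :=
  intervalIntegral.integral_hasDerivAt_left
    (hf.mono (ordConnected_Ioo.uIcc_subset hx hρ)).intervalIntegrable
    (hf.stronglyMeasurableAtFilter isOpen_Ioo x hx) (hf.continuousAt (isOpen_Ioo.mem_nhds hx))

lemma deriv_deriv_rpow_le_deriv_div {f g : ℝ → ℝ} {γ f' r : ℝ} (hγ : 0 ≤ γ)
    (hg : ∀ᶠ x in 𝓝 r, HasDerivAt g (-((1 + γ) * f x)) x ∧ 0 < g x)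
    (hf : HasDerivAt f f' r) (hf' : f r / r ≤ f') :
    deriv (deriv fun x => g x ^ (1 / (1 + γ))) r ≤ deriv (fun x => g x ^ (1 / (1 + γ))) r / r := by
  set p := 1 / (1 + γ)
  have hp : (1 + γ) * p = 1 := by simp only [p]; field_simp
  have hdw : ∀ x, HasDerivAt g (-((1 + γ) * f x)) x → 0 < g x →
      HasDerivAt (fun y => g y ^ p) (-(f x * g x ^ (p - 1))) x := fun x hgx hpos => by
    convert hgx.rpow_const (p := p) (Or.inl hpos.ne') using 1
    linear_combination (f x * g x ^ (p - 1)) * hp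
  have hev : deriv (fun x => g x ^ p) =ᶠ[𝓝 r] fun x => -(f x * g x ^ (p - 1)) :=
    hg.mono fun x hx => (hdw x hx.1 hx.2).deriv
  obtain ⟨hgr, hpos⟩ := hg.self_of_nhds
  have hd : HasDerivAt (fun x => -(f x * g x ^ (p - 1)))
      (-(f' * g r ^ (p - 1) + f r * (-((1 + γ) * f r) * (p - 1) * g r ^ (p - 1 - 1)))) r :=
    (hf.mul (hgr.rpow_const (Or.inl hpos.ne'))).neg
  rw [hev.deriv_eq, (hdw r hgr hpos).deriv, hd.deriv]
  have hG : 0 ≤ g r ^ (p - 1 - 1) := (Real.rpow_pos_of_pos hpos _).le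
  calc -(f' * g r ^ (p - 1) + f r * (-((1 + γ) * f r) * (p - 1) * g r ^ (p - 1 - 1)))
      = -(f' * g r ^ (p - 1)) - γ * f r ^ 2 * g r ^ (p - 1 - 1) := by
        linear_combination (f r ^ 2 * g r ^ (p - 1 - 1)) * hp
    _ ≤ -(f r / r * g r ^ (p - 1)) := by
        have := mul_le_mul_of_nonneg_right hf' (Real.rpow_pos_of_pos hpos (p - 1)).le
        nlinarith [mul_nonneg (mul_nonneg hγ (sq_nonneg (f r))) hG]
    _ = -(f r * g r ^ (p - 1)) / r := by ring

lemma integral_inv_sub {R a ρ : ℝ} (ha : a < R) (hρ : ρ < R) :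
    ∫ s in a..ρ, (R - s)⁻¹ = Real.log ((R - a) / (R - ρ)) := by
  rw [intervalIntegral.integral_comp_sub_left (fun x => x⁻¹) R,
    integral_inv_of_pos (sub_pos.2 hρ) (sub_pos.2 ha)]

lemma tendsto_log_div_sub_nhdsLT_atTop {R a : ℝ} (ha : a < R) :
    Tendsto (fun ρ => Real.log ((R - a) / (R - ρ))) (𝓝[<] R) atTop := by
  have hsub : Tendsto (fun ρ => R - ρ) (𝓝[<] R) (𝓝[>] 0) := by
    refine tendsto_nhdsWithin_of_tendsto_nhds_of_eventually_within _ ?_ ?_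
    · simpa using ((continuous_sub_left R).tendsto R).mono_left nhdsWithin_le_nhds
    · filter_upwards [self_mem_nhdsWithin] with ρ (hρ : ρ < R) using sub_pos.2 hρ
  refine Real.tendsto_log_atTop.comp ?_
  simpa only [div_eq_mul_inv, Function.comp_def] using
    (tendsto_inv_nhdsGT_zero.comp hsub).const_mul_atTop (sub_pos.2 ha)

lemma tendsto_intervalIntegral_nhdsLT_atTop {f : ℝ → ℝ} {a R c : ℝ} (ha : a < R)
    (hf : ContinuousOn f (Ico a R)) (hc : 0 < c)
    (hlow : ∀ᶠ s in 𝓝[<] R, c * (R - s)⁻¹ ≤ f s) :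
    Tendsto (fun ρ => ∫ s in a..ρ, f s) (𝓝[<] R) atTop := by
  obtain ⟨r₁, hr₁R : r₁ < R, hr₁⟩ := mem_nhdsLT_iff_exists_Ioo_subset.1 hlow
  obtain ⟨r₂, hr₁₂, har₂, hr₂R⟩ : ∃ r₂, r₁ < r₂ ∧ a < r₂ ∧ r₂ < R :=
    ⟨(max r₁ a + R) / 2, by linarith [le_max_left r₁ a], by linarith [le_max_right r₁ a],
      by linarith [max_lt hr₁R ha]⟩
  have hint : ∀ x ∈ Ico a R, ∀ y ∈ Ico a R, IntervalIntegrable f MeasureTheory.volume x y :=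
    fun x hx y hy => (hf.mono (ordConnected_Ico.uIcc_subset hx hy)).intervalIntegrable
  have hlower : ∀ ρ ∈ Ioo r₂ R,
      (∫ s in a..r₂, f s) + c * Real.log ((R - r₂) / (R - ρ)) ≤ ∫ s in a..ρ, f s := by
    rintro ρ ⟨hr₂ρ, hρR⟩
    have ha₂ : r₂ ∈ Ico a R := ⟨by linarith, hr₂R⟩
    have haρ : ρ ∈ Ico a R := ⟨by linarith, hρR⟩
    rw [← intervalIntegral.integral_add_adjacent_intervals (hint a ⟨le_rfl, ha⟩ r₂ ha₂)
      (hint r₂ ha₂ ρ haρ), ← integral_inv_sub hr₂R hρR, ← intervalIntegral.integral_const_mul]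
    refine add_le_add le_rfl (intervalIntegral.integral_mono_on hr₂ρ.le ?_ (hint r₂ ha₂ ρ haρ)
      fun s hs => hr₁ ⟨by linarith [hs.1], by linarith [hs.2]⟩)
    refine ContinuousOn.intervalIntegrable (continuousOn_const.mul
      ((continuousOn_const.sub continuousOn_id).inv₀ fun s hs => ?_))
    rw [uIcc_of_le hr₂ρ.le] at hs
    exact (sub_pos.2 (hs.2.trans_lt hρR)).ne'
  exact tendsto_atTop_mono' _ (eventually_of_mem (Ioo_mem_nhdsLT hr₂R) hlower)
    (tendsto_atTop_add_const_left _ _ ((tendsto_log_div_sub_nhdsLT_atTop hr₂R).const_mul_atTop hc))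

noncomputable def wIntegrand (k b R β s : ℝ) : ℝ := s * (R - s) ^ β / (k + b * s)

section wIntegrand

variable {k b R β s : ℝ}

lemma wIntegrand_pos (hb : 0 < b) (hbR : b * R ≤ k) (hs : 0 < s) (hsR : s < R) :
    0 < wIntegrand k b R β s := by
  have : 0 < k + b * s := by nlinarith [mul_pos hb hs]
  unfold wIntegrand
  have := Real.rpow_pos_of_pos (sub_pos.2 hsR) β
  positivity

lemma continuousOn_wIntegrand (hb : 0 < b) (hbR : b * R ≤ k) :
    ContinuousOn (wIntegrand k b R β) (Ico 0 R) := by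
  refine continuousOn_id.mul ((continuousOn_const.sub continuousOn_id).rpow_const
    fun s hs => Or.inl (sub_pos.2 hs.2).ne') |>.div (by fun_prop) fun s hs => ?_
  nlinarith [mul_nonneg hb.le hs.1, mul_pos hb (hs.1.trans_lt hs.2)]

lemma hasDerivAt_wIntegrand (hs : s ≠ 0) (hsR : s < R) (hk : k + b * s ≠ 0) :
    HasDerivAt (wIntegrand k b R β)
      (wIntegrand k b R β s * (1 / s - β / (R - s) - b / (k + b * s))) s := by
  have hRs : R - s ≠ 0 := (sub_pos.2 hsR).ne'
  have hpow : HasDerivAt (fun x => (R - x) ^ β) (-1 * β * (R - s) ^ (β - 1)) s := by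
    simpa using ((hasDerivAt_id s).const_sub R).rpow_const (p := β) (Or.inl hRs)
  refine (((hasDerivAt_id' s).mul hpow).div
    (((hasDerivAt_id' s).const_mul b).const_add k) hk).congr_deriv ?_
  rw [Real.rpow_sub_one hRs, wIntegrand, Pi.mul_apply]
  have hk' : k + s * b ≠ 0 := by rwa [mul_comm]
  field_simp
  ring

lemma wIntegrand_div_le_deriv (hb : 0 < b) (hbR : b * R ≤ k) (hβ : β ≤ -1) (hs : 0 < s)
    (hsR : s < R) :
    wIntegrand k b R β s / s ≤
      wIntegrand k b R β s * (1 / s - β / (R - s) - b / (k + b * s)) := by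
  have hRs : 0 < R - s := sub_pos.2 hsR
  have hks : 0 < k + b * s := by nlinarith [mul_pos hb hs]
  -- `b (R - s) ≤ b R ≤ k ≤ k + b s ≤ -β (k + b s)`
  have key : b / (k + b * s) ≤ -β / (R - s) := by
    rw [div_le_div_iff₀ hks hRs]
    nlinarith [mul_pos hb hs]
  have := (wIntegrand_pos (β := β) hb hbR hs hsR).le
  rw [div_eq_mul_one_div]
  gcongr
  linarith [neg_div (R - s) β]

lemma eventually_inv_sub_le_wIntegrand (hb : 0 < b) (hbR : b * R ≤ k) (hβ : β ≤ -1)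
    (hR : 0 < R) :
    ∀ᶠ s in 𝓝[<] R, R / 2 / (k + b * R) * (R - s)⁻¹ ≤ wIntegrand k b R β s := by
  filter_upwards [Ioo_mem_nhdsLT (max_lt (by linarith : R / 2 < R) (by linarith : R - 1 < R))]
    with s ⟨hs, hsR⟩
  rw [max_lt_iff] at hs
  have hRs : 0 < R - s := sub_pos.2 hsR
  have hinv : (R - s)⁻¹ ≤ (R - s) ^ β := by
    simpa [Real.rpow_neg_one] using
      Real.rpow_le_rpow_of_exponent_ge hRs (by linarith) hβ
  rw [div_mul_eq_mul_div, wIntegrand]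
  refine div_le_div₀ (mul_nonneg (by linarith) (Real.rpow_pos_of_pos hRs β).le)
    (mul_le_mul (by linarith) hinv (inv_nonneg.2 hRs.le) (by linarith))
    (by nlinarith [mul_pos hb hR]) (by nlinarith)

end wIntegrand

theorem stmt13_general (b R γ β : ℝ) (k : ℕ) (hb : 0 < b)
    (hγ : 0 < γ) (hβ : β ≤ -1) (hbR : b * R ≤ k)
    (w : ℝ → ℝ → ℝ)
    (hw : ∀ ρ r, w ρ r =
      ((1 + γ) * ∫ s in r..ρ, s * (R - s) ^ β / (k + b * s)) ^ (1 / (1 + γ))) :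
    (∀ ρ ∈ Set.Ioo (0 : ℝ) R, ∀ r ∈ Set.Ioo (0 : ℝ) ρ,
        deriv (deriv (w ρ)) r ≤ deriv (w ρ) r / r) ∧
      ∀ r ∈ Set.Ico (0 : ℝ) R, Tendsto (fun ρ => w ρ r) (𝓝[<] R) atTop := by
  refine ⟨fun ρ ⟨hρ0, hρR⟩ r ⟨hr0, hrρ⟩ => ?_, fun r ⟨hr0, hrR⟩ => ?_⟩
  · have hf : ContinuousOn (wIntegrand k b R β) (Ioo 0 R) :=
      (continuousOn_wIntegrand hb hbR).mono Ioo_subset_Ico_self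
    have hwρ : w ρ = fun x => ((1 + γ) * ∫ s in x..ρ, wIntegrand k b R β s) ^ (1 / (1 + γ)) :=
      funext (hw ρ)
    rw [hwρ]
    refine deriv_deriv_rpow_le_deriv_div hγ.le ?_
      (hasDerivAt_wIntegrand hr0.ne' (hrρ.trans hρR) (by nlinarith [mul_pos hb hr0]))
      (wIntegrand_div_le_deriv hb hbR hβ hr0 (hrρ.trans hρR))
    filter_upwards [Ioo_mem_nhds hr0 hrρ] with x ⟨hx0, hxρ⟩
    refine ⟨((hasDerivAt_intervalIntegral_left_of_continuousOn hf ⟨hx0, hxρ.trans hρR⟩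
      ⟨hρ0, hρR⟩).const_mul (1 + γ)).congr_deriv (by ring), mul_pos (by linarith) ?_⟩
    exact intervalIntegral.intervalIntegral_pos_of_pos_on
      (hf.mono (ordConnected_Ioo.uIcc_subset ⟨hx0, hxρ.trans hρR⟩ ⟨hρ0, hρR⟩)).intervalIntegrable
      (fun s hs => wIntegrand_pos hb hbR (hx0.trans hs.1) (hs.2.trans hρR)) hxρ
  · have hR : 0 < R := hr0.trans_lt hrR
    have hc : 0 < R / 2 / (k + b * R) := by
      have := mul_pos hb hR
      exact div_pos (by positivity) (by linarith)
    have hpow : Tendsto (fun y => ((1 + γ) * y) ^ (1 / (1 + γ))) atTop atTop :=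
      (tendsto_rpow_atTop (by positivity)).comp (tendsto_id.const_mul_atTop (by positivity))
    exact (hpow.comp (tendsto_intervalIntegral_nhdsLT_atTop hrR
      ((continuousOn_wIntegrand hb hbR).mono (Ico_subset_Ico_left hr0)) hc
      (eventually_inv_sub_le_wIntegrand hb hbR hβ hR))).congr fun ρ => (hw ρ r).symm

theorem stmt13 (b R γ β : ℝ) (k : ℕ) (hk : 1 ≤ k) (hb : 0 < b) (hR : 0 < R)
    (hγ : 0 < γ) (hβ : β ≤ -1) (hbR : b * R ≤ k)
    (w : ℝ → ℝ → ℝ)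
    (hw : ∀ ρ r, w ρ r =
      ((1 + γ) * ∫ s in r..ρ, s * (R - s) ^ β / (k + b * s)) ^ (1 / (1 + γ))) :
    (∀ ρ ∈ Set.Ioo (0 : ℝ) R, ∀ r ∈ Set.Ioo (0 : ℝ) ρ,
        deriv (deriv (w ρ)) r ≤ deriv (w ρ) r / r) ∧
      ∀ r ∈ Set.Ico (0 : ℝ) R, Tendsto (fun ρ => w ρ r) (𝓝[<] R) atTop :=
  stmt13_general b R γ β k hb hγ hβ hbR w hw
end
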